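/- Let ν be a partition with ℓ removable corners, of weights R_1,…,R_ℓ, and ℓ+1 addable corners, of weights A_0,…,A_ℓ, and for each j set d_j = (1/A_j)·∏_{i=1}^{ℓ}(1 − qt·R_i/A_j) / ∏_{0≤i≤ℓ, i≠j}(1 − A_i/A_j) ∈ ℚ(q,t). Then: (a) Σ_{j=0}^{ℓ} d_j = 1; and (b) for every integer k ≥ 1, Σ_{j=0}^{ℓ} d_j·A_j^k equals the coefficient of y^{k−1} in the formal power series ∏_{i=1}^{ℓ}(1 − qt·R_i·y) / ∏_{j=0}^{ℓ}(1 − A_j·y) ∈ ℚ(q,t)[[y]]. (This is the summation formula Σ_{μ←ν} d_{μν}(T_μ/T_ν)^k = (−1)^{k−1}e_{k−1}[D_ν] for the e_1-Pieri coefficients of modified Macdonald polynomials.) -/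

import Mathlib

open scoped Classical
open PowerSeries

noncomputable section

abbrev K := FractionRing (MvPolynomial (Fin 2) ℚ)

def q : K := algebraMap (MvPolynomial (Fin 2) ℚ) K (MvPolynomial.X 0)
def t : K := algebraMap (MvPolynomial (Fin 2) ℚ) K (MvPolynomial.X 1)

/-- the weight of a cell `(i,j)` (row `i`, column `j`) is `t^i * q^j` -/
def w (c : ℕ × ℕ) : K := t ^ c.1 * q ^ c.2

/-- `B_μ = Σ_{c ∈ μ} w(c)` -/
def Bsum (μ : YoungDiagram) : K := ∑ c ∈ μ.cells, w c

/-- a removable corner: a cell of `μ` whose removal leaves a Young diagram -/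
def IsRemovable (μ : YoungDiagram) (c : ℕ × ℕ) : Prop :=
  c ∈ μ ∧ IsLowerSet (↑(μ.cells.erase c) : Set (ℕ × ℕ))

/-- an addable corner: a cell not in `μ` whose addition gives a Young diagram -/
def IsAddable (μ : YoungDiagram) (c : ℕ × ℕ) : Prop :=
  c ∉ μ ∧ IsLowerSet (↑(insert c μ.cells) : Set (ℕ × ℕ))

/-- the arm of a cell: number of cells of `μ` strictly east of it in its row -/
def arm (μ : YoungDiagram) (c : ℕ × ℕ) : ℕ :=
  (μ.cells.filter fun d => d.1 = c.1 ∧ c.2 < d.2).card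

/-- the leg of a cell: number of cells of `μ` strictly north of it in its column -/
def leg (μ : YoungDiagram) (c : ℕ × ℕ) : ℕ :=
  (μ.cells.filter fun d => d.2 = c.2 ∧ c.1 < d.1).card

/-!
Write `c_a = A_a d_a`. Since there is one more addable than removable corner and the `A_a` are
distinct, Lagrange interpolation at the nodes `A_a⁻¹` gives the partial fraction decomposition
`∏ (1 - qtR y) / ∏ (1 - A y) = ∑ c_a / (1 - A_a y)`; expanding the geometric series gives (b).
Comparing the top coefficients of the numerators gives `∑ c_a / A_a = ∏ qtR / ∏ A`, and this
ratio is `1` because the addable corners sum to the removable corners shifted by `(1, 1)` in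
`ℕ × ℕ`: row by row this is a telescoping sum of the drops in row length.
-/

open Finset

section PartialFractions

variable {R F ι κ : Type*} [CommRing R] [Field F]

lemma natDegree_one_sub_C_mul_X_le (b : R) :
    (1 - Polynomial.C b * Polynomial.X).natDegree ≤ 1 := by
  compute_degree!

lemma natDegree_prod_one_sub_C_mul_X_le (r : Finset κ) (B : κ → R) :
    (∏ b ∈ r, (1 - Polynomial.C (B b) * Polynomial.X)).natDegree ≤ #r := by
  refine (Polynomial.natDegree_prod_le _ _).trans ?_
  simpa using sum_le_card_nsmul r _ 1 fun b _ => natDegree_one_sub_C_mul_X_le (B b)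

lemma coeff_card_prod_one_sub_C_mul_X (r : Finset κ) (B : κ → R) :
    (∏ b ∈ r, (1 - Polynomial.C (B b) * Polynomial.X)).coeff #r = (-1) ^ #r * ∏ b ∈ r, B b := by
  simpa [Polynomial.coeff_one, ← prod_neg] using Polynomial.coeff_prod_of_natDegree_le (s := r)
    (fun b => 1 - Polynomial.C (B b) * Polynomial.X) 1 fun b _ => natDegree_one_sub_C_mul_X_le _

lemma mk_pow_mul_one_sub_C_mul_X (α : R) :
    (PowerSeries.mk (α ^ ·)) * (1 - PowerSeries.C α * PowerSeries.X) = 1 := by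
  simpa [PowerSeries.rescale_mk, PowerSeries.rescale_X] using
    congrArg (PowerSeries.rescale α) (PowerSeries.mk_one_mul_one_sub_eq_one R)

variable [DecidableEq ι]

/-- The coefficient `c a` in `∏ b, (1 - B b y) / ∏ a, (1 - A a y) = ∑ a, c a / (1 - A a y)`. -/
def partialFractionCoeff (s : Finset ι) (r : Finset κ) (A : ι → F) (B : κ → F) (a : ι) : F :=
  (∏ b ∈ r, (1 - B b / A a)) / ∏ a' ∈ s.erase a, (1 - A a' / A a)

variable {s : Finset ι} {r : Finset κ} {A : ι → F} {B : κ → F}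

theorem prod_one_sub_C_mul_X_eq_sum_partialFractionCoeff (hA : Set.InjOn A s)
    (hA0 : ∀ a ∈ s, A a ≠ 0) (hrs : #r < #s) :
    ∏ b ∈ r, (1 - Polynomial.C (B b) * Polynomial.X) =
      ∑ a ∈ s, Polynomial.C (partialFractionCoeff s r A B a) *
        ∏ a' ∈ s.erase a, (1 - Polynomial.C (A a') * Polynomial.X) := by
  have hinv : Set.InjOn (fun a => (A a)⁻¹) s := fun a ha a' ha' h => hA ha ha' (inv_inj.mp h)
  refine Polynomial.eq_of_degrees_lt_of_eval_index_eq s hinv ?_ ?_ ?_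
  · exact Polynomial.degree_le_natDegree.trans_lt
      (by exact_mod_cast (natDegree_prod_one_sub_C_mul_X_le r B).trans_lt hrs)
  · refine (Polynomial.degree_sum_le _ _).trans_lt ((Finset.sup_lt_iff (WithBot.bot_lt_coe _)).2 ?_)
    intro a ha
    refine Polynomial.degree_le_natDegree.trans_lt (WithBot.coe_lt_coe.2 ?_)
    refine (Polynomial.natDegree_C_mul_le _ _).trans_lt ?_
    refine (natDegree_prod_one_sub_C_mul_X_le _ _).trans_lt ?_
    rw [card_erase_of_mem ha]
    exact Nat.sub_lt (card_pos.2 ⟨a, ha⟩) one_pos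
  · intro a ha
    have hden : ∏ a' ∈ s.erase a, (1 - A a' / A a) ≠ 0 :=
      prod_ne_zero_iff.2 fun a' ha' => sub_ne_zero.2 fun h =>
        ne_of_mem_erase ha' (hA (mem_of_mem_erase ha') ha ((div_eq_one_iff_eq (hA0 a ha)).1 h.symm))
    rw [Polynomial.eval_finsetSum, sum_eq_single_of_mem a ha]
    · simp only [Polynomial.eval_mul, Polynomial.eval_C, Polynomial.eval_prod, Polynomial.eval_sub,
        Polynomial.eval_one, Polynomial.eval_X, ← div_eq_mul_inv, partialFractionCoeff]
      exact (div_mul_cancel₀ _ hden).symm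
    · intro a' _ ha'
      simp only [Polynomial.eval_mul, Polynomial.eval_prod]
      refine mul_eq_zero_of_right _ (prod_eq_zero (mem_erase.2 ⟨ha'.symm, ha⟩) ?_)
      simp [hA0 a ha]

theorem coeff_prod_one_sub_C_mul_X_mul_inv_prod (hA : Set.InjOn A s) (hA0 : ∀ a ∈ s, A a ≠ 0)
    (hrs : #r < #s) (n : ℕ) :
    PowerSeries.coeff n ((∏ b ∈ r, (1 - PowerSeries.C (B b) * PowerSeries.X)) *
        (∏ a ∈ s, (1 - PowerSeries.C (A a) * PowerSeries.X))⁻¹) =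
      ∑ a ∈ s, partialFractionCoeff s r A B a * A a ^ n := by
  have hpoly := congrArg Polynomial.coeToPowerSeries.ringHom
    (prod_one_sub_C_mul_X_eq_sum_partialFractionCoeff (B := B) hA hA0 hrs)
  simp only [map_prod, map_sum, map_sub, map_mul, map_one,
    Polynomial.coeToPowerSeries.ringHom_apply,
    Polynomial.coe_C, Polynomial.coe_X] at hpoly
  have hgeom : ∏ b ∈ r, (1 - PowerSeries.C (B b) * PowerSeries.X) =
      (∑ a ∈ s, PowerSeries.C (partialFractionCoeff s r A B a) * PowerSeries.mk (A a ^ ·)) *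
        ∏ a ∈ s, (1 - PowerSeries.C (A a) * PowerSeries.X) := by
    rw [hpoly, sum_mul]
    refine sum_congr rfl fun a ha => ?_
    rw [← mul_prod_erase s _ ha]
    linear_combination (-PowerSeries.C (partialFractionCoeff s r A B a) *
      ∏ a' ∈ s.erase a, (1 - PowerSeries.C (A a') * PowerSeries.X)) *
        mk_pow_mul_one_sub_C_mul_X (A a)
  rw [hgeom, mul_assoc, PowerSeries.mul_inv_cancel _ (by simp [map_prod]), mul_one, map_sum]
  simp [PowerSeries.coeff_C_mul]

theorem sum_inv_mul_partialFractionCoeff (hA : Set.InjOn A s) (hA0 : ∀ a ∈ s, A a ≠ 0)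
    (hrs : #s = #r + 1) :
    ∑ a ∈ s, (A a)⁻¹ * partialFractionCoeff s r A B a = (∏ b ∈ r, B b) / ∏ a ∈ s, A a := by
  have htop := congrArg (Polynomial.coeff · #r)
    (prod_one_sub_C_mul_X_eq_sum_partialFractionCoeff (r := r) (B := B) hA hA0 (by omega))
  have hcoeff : ∀ a ∈ s, (∏ a' ∈ s.erase a, (1 - Polynomial.C (A a') * Polynomial.X)).coeff #r =
      (-1) ^ #r * ∏ a' ∈ s.erase a, A a' := by
    intro a ha
    simpa [card_erase_of_mem ha, hrs] using coeff_card_prod_one_sub_C_mul_X (s.erase a) A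
  simp only [Polynomial.finsetSum_coeff, Polynomial.coeff_C_mul, coeff_card_prod_one_sub_C_mul_X,
    sum_congr rfl fun a ha => congrArg _ (hcoeff a ha)] at htop
  rw [eq_div_iff (prod_ne_zero_iff.2 hA0), sum_mul]
  refine (mul_left_cancel₀ (pow_ne_zero #r (neg_ne_zero.2 one_ne_zero)) ?_).symm
  rw [htop, mul_sum]
  refine sum_congr rfl fun a ha => ?_
  rw [← mul_prod_erase s A ha]
  field_simp [hA0 a ha]

end PartialFractions

section Weights

lemma w_eq_algebraMap_monomial (c : ℕ × ℕ) :
    w c = algebraMap (MvPolynomial (Fin 2) ℚ) K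
      (MvPolynomial.monomial (Finsupp.single 1 c.1 + Finsupp.single 0 c.2) 1) := by
  rw [w, q, t, ← map_pow, ← map_pow, ← map_mul, MvPolynomial.X_pow_eq_monomial,
    MvPolynomial.X_pow_eq_monomial, MvPolynomial.monomial_mul, one_mul]

lemma w_ne_zero (c : ℕ × ℕ) : w c ≠ 0 := by
  rw [w_eq_algebraMap_monomial]
  exact (map_ne_zero_iff _ (IsFractionRing.injective _ K)).2 (by simp)

lemma w_injective : Function.Injective w := by
  intro c d h
  rw [w_eq_algebraMap_monomial, w_eq_algebraMap_monomial] at h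
  have h := MvPolynomial.monomial_left_injective one_ne_zero (IsFractionRing.injective _ K h)
  ext
  · simpa using DFunLike.congr_fun h 1
  · simpa using DFunLike.congr_fun h 0

lemma prod_w {ι : Type*} (s : Finset ι) (f : ι → ℕ × ℕ) :
    ∏ i ∈ s, w (f i) = w (∑ i ∈ s, f i) := by
  simp [w, prod_mul_distrib, prod_pow_eq_pow_sum, Prod.fst_sum, Prod.snd_sum]

lemma q_mul_t_mul_w (c : ℕ × ℕ) : q * t * w c = w (c + (1, 1)) := by
  simp only [w, Prod.fst_add, Prod.snd_add, pow_succ]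
  ring

end Weights

section LowerSet

variable {α : Type*} [PartialOrder α] {s : Set α} {c : α}

lemma IsLowerSet.isLowerSet_diff_singleton_iff (hs : IsLowerSet s) :
    IsLowerSet (s \ {c}) ↔ ∀ d ∈ s, ¬c < d := by
  constructor
  · intro h d hd hcd
    exact (h hcd.le ⟨hd, hcd.ne'⟩).2 rfl
  · rintro h a b hba ⟨ha, hac⟩
    refine ⟨hs hba ha, ?_⟩
    rintro rfl
    exact h a ha (hba.lt_of_ne (Ne.symm hac))

lemma IsLowerSet.isLowerSet_insert_iff (hs : IsLowerSet s) :
    IsLowerSet (insert c s) ↔ ∀ d < c, d ∈ s := by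
  constructor
  · intro h d hdc
    exact (h hdc.le (Set.mem_insert c s)).resolve_left hdc.ne
  · rintro h a b hba (rfl | ha)
    · exact hba.eq_or_lt.imp id (h b)
    · exact Or.inr (hs hba ha)

end LowerSet

namespace YoungDiagram

variable {ν : YoungDiagram}

lemma isRemovable_iff {i j : ℕ} :
    IsRemovable ν (i, j) ↔ j + 1 = ν.rowLen i ∧ ν.rowLen (i + 1) ≤ j := by
  rw [IsRemovable, coe_erase, ν.isLowerSet.isLowerSet_diff_singleton_iff]
  constructor
  · rintro ⟨hij, hmax⟩
    have hright : (i, j + 1) ∉ ν := fun h => hmax _ h (by simp [Prod.lt_iff])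
    have hup : (i + 1, j) ∉ ν := fun h => hmax _ h (by simp [Prod.lt_iff])
    simp only [mem_iff_lt_rowLen] at hij hright hup
    omega
  · rintro ⟨hlen, hnext⟩
    refine ⟨ν.mem_iff_lt_rowLen.2 (by omega), ?_⟩
    rintro ⟨a, b⟩ hab hlt
    rw [mem_coe, mem_cells, mem_iff_lt_rowLen] at hab
    rcases Prod.lt_iff.1 hlt with ⟨ha, hb⟩ | ⟨ha, hb⟩
    · have := ν.rowLen_anti (i + 1) a ha
      omega
    · have := ν.rowLen_anti i a ha
      omega

lemma isAddable_iff {i j : ℕ} :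
    IsAddable ν (i, j) ↔ j = ν.rowLen i ∧ ∀ i' < i, j < ν.rowLen i' := by
  rw [IsAddable, coe_insert, ν.isLowerSet.isLowerSet_insert_iff]
  simp only [mem_coe, mem_cells, mem_iff_lt_rowLen, Prod.forall]
  constructor
  · rintro ⟨hij, hlow⟩
    refine ⟨?_, fun i' hi' => hlow i' j (by simp [Prod.lt_iff, hi'])⟩
    rcases j with _ | j
    · omega
    · have := hlow i j (by simp [Prod.lt_iff])
      omega
  · rintro ⟨rfl, h⟩
    refine ⟨lt_irrefl _, fun a b hlt => ?_⟩
    rcases Prod.lt_iff.1 hlt with ⟨ha, hb⟩ | ⟨ha, hb⟩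
    · exact hb.trans_lt (h a ha)
    · exact hb.trans_le (ν.rowLen_anti a i ha)

def cornerRows (ν : YoungDiagram) : Finset ℕ :=
  (range (ν.colLen 0)).filter fun i => ν.rowLen (i + 1) < ν.rowLen i

lemma mem_cornerRows {i : ℕ} : i ∈ ν.cornerRows ↔ ν.rowLen (i + 1) < ν.rowLen i := by
  simp only [cornerRows, mem_filter, mem_range, and_iff_right_iff_imp]
  exact fun h => ν.mem_iff_lt_colLen.1 (ν.mem_iff_lt_rowLen.2 (by omega))

def removableCorners (ν : YoungDiagram) : Finset (ℕ × ℕ) :=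
  ν.cornerRows.image fun i => (i, ν.rowLen i - 1)

def addableCorners (ν : YoungDiagram) : Finset (ℕ × ℕ) :=
  insert (0, ν.rowLen 0) (ν.cornerRows.image fun i => (i + 1, ν.rowLen (i + 1)))

lemma mem_removableCorners {c : ℕ × ℕ} : c ∈ ν.removableCorners ↔ IsRemovable ν c := by
  obtain ⟨i, j⟩ := c
  simp only [removableCorners, mem_image, Prod.mk.injEq, isRemovable_iff]
  constructor
  · rintro ⟨i, hi, rfl, rfl⟩
    have := mem_cornerRows.1 hi
    omega
  · rintro ⟨hlen, hnext⟩
    exact ⟨i, mem_cornerRows.2 (by omega), rfl, by omega⟩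

lemma mem_addableCorners {c : ℕ × ℕ} : c ∈ ν.addableCorners ↔ IsAddable ν c := by
  obtain ⟨i, j⟩ := c
  simp only [addableCorners, mem_insert, mem_image, Prod.mk.injEq, isAddable_iff]
  constructor
  · rintro (⟨rfl, rfl⟩ | ⟨i, hi, rfl, rfl⟩)
    · simp
    · exact ⟨rfl, fun i' hi' => (mem_cornerRows.1 hi).trans_le (ν.rowLen_anti i' i (by omega))⟩
  · rintro ⟨rfl, h⟩
    rcases i with _ | i
    · exact Or.inl ⟨rfl, rfl⟩
    · exact Or.inr ⟨i, mem_cornerRows.2 (h i i.lt_succ_self), rfl, rfl⟩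

lemma card_addableCorners : #ν.addableCorners = #ν.removableCorners + 1 := by
  rw [addableCorners, removableCorners, card_insert_of_notMem (by simp),
    card_image_of_injective _ fun a b h => by simpa using congrArg Prod.fst h,
    card_image_of_injective _ fun a b h => congrArg Prod.fst h]

lemma rowLen_zero_add_sum_rowLen_succ :
    ν.rowLen 0 + ∑ i ∈ ν.cornerRows, ν.rowLen (i + 1) = ∑ i ∈ ν.cornerRows, ν.rowLen i := by
  have htel : ∑ i ∈ ν.cornerRows, ((ν.rowLen i : ℤ) - ν.rowLen (i + 1)) = ν.rowLen 0 := by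
    have hlast : ν.rowLen (ν.colLen 0) = 0 := by
      by_contra h
      exact (ν.mem_iff_lt_colLen.1 (ν.mem_iff_lt_rowLen.2 (Nat.pos_of_ne_zero h))).false
    have hdrop : ∀ i ∈ range (ν.colLen 0),
        (ν.rowLen i : ℤ) - ν.rowLen (i + 1) ≠ 0 → ν.rowLen (i + 1) < ν.rowLen i := fun i _ h => by
      have := ν.rowLen_anti i (i + 1) i.le_succ
      omega
    rw [cornerRows, sum_filter_of_ne hdrop, sum_range_sub', hlast]
    simp
  rw [sum_sub_distrib] at htel
  zify
  linarith

lemma sum_addableCorners :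
    ∑ a ∈ ν.addableCorners, a = ∑ r ∈ ν.removableCorners, (r + (1, 1)) := by
  rw [addableCorners, removableCorners, sum_insert (by simp),
    sum_image fun a _ b _ h => by simpa using congrArg Prod.fst h,
    sum_image fun a _ b _ h => congrArg Prod.fst h]
  ext
  · simp [Prod.fst_sum]
  · have hpos : ∀ i ∈ ν.cornerRows, ν.rowLen i - 1 + 1 = ν.rowLen i := fun i hi => by
      have := mem_cornerRows.1 hi
      omega
    simp only [Prod.snd_add, Prod.snd_sum, sum_congr rfl hpos]
    exact rowLen_zero_add_sum_rowLen_succ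

lemma prod_w_addableCorners :
    ∏ a ∈ ν.addableCorners, w a = ∏ r ∈ ν.removableCorners, q * t * w r :=
  calc ∏ a ∈ ν.addableCorners, w a
    _ = w (∑ a ∈ ν.addableCorners, a) := prod_w _ id
    _ = w (∑ r ∈ ν.removableCorners, (r + (1, 1))) := by rw [sum_addableCorners]
    _ = ∏ r ∈ ν.removableCorners, q * t * w r := by simp only [q_mul_t_mul_w, prod_w]

end YoungDiagram

/-- the summation formulas for the corner-weight `e₁`-Pieri coefficients
`d_{μν}`: they sum to `1`, and with weight `A_j^k` they give the coefficient of
`y^{k-1}` in `∏(1 − qt·R·y)/∏(1 − A·y)`. -/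
theorem stmt_5 (ν : YoungDiagram) (Rem Add : Finset (ℕ × ℕ))
    (hRem : ∀ x, x ∈ Rem ↔ IsRemovable ν x)
    (hAdd : ∀ x, x ∈ Add ↔ IsAddable ν x)
    (d : (ℕ × ℕ) → K)
    (hd : ∀ a ∈ Add, d a =
      (w a)⁻¹ * (∏ r ∈ Rem, (1 - q * t * w r / w a)) /
        ∏ a' ∈ Add.erase a, (1 - w a' / w a)) :
    (∑ a ∈ Add, d a) = 1 ∧
    ∀ k : ℕ, 1 ≤ k →
      (∑ a ∈ Add, d a * w a ^ k) =
        coeff (R := K) (k - 1)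
          ((∏ r ∈ Rem, (1 - C (R := K) (q * t * w r) * X)) *
            (∏ a ∈ Add, (1 - C (R := K) (w a) * X))⁻¹) := by
  obtain rfl : Rem = ν.removableCorners :=
    ext fun x => (hRem x).trans YoungDiagram.mem_removableCorners.symm
  obtain rfl : Add = ν.addableCorners :=
    ext fun x => (hAdd x).trans YoungDiagram.mem_addableCorners.symm
  have hd' : ∀ a ∈ ν.addableCorners, d a = (w a)⁻¹ *
      partialFractionCoeff ν.addableCorners ν.removableCorners w (fun r => q * t * w r) a :=
    fun a ha => by rw [hd a ha, mul_div_assoc, partialFractionCoeff]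
  have hinj : Set.InjOn w ν.addableCorners := w_injective.injOn
  have hw0 : ∀ a ∈ ν.addableCorners, w a ≠ 0 := fun a _ => w_ne_zero a
  have hcard := ν.card_addableCorners
  refine ⟨?_, fun k hk => ?_⟩
  · rw [sum_congr rfl hd', sum_inv_mul_partialFractionCoeff hinj hw0 hcard,
      ← ν.prod_w_addableCorners, div_self (prod_ne_zero_iff.2 hw0)]
  · obtain ⟨n, rfl⟩ := Nat.exists_eq_add_of_le' hk
    rw [Nat.add_sub_cancel, coeff_prod_one_sub_C_mul_X_mul_inv_prod hinj hw0 (by omega)]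
    refine sum_congr rfl fun a ha => ?_
    rw [hd' a ha, pow_succ']
    field_simp [w_ne_zero a]

end
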